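/- arXiv:2103.01131 — 6 statements merged into one kernel-verified Lean document; each statement's English description precedes it below -/
import Mathlib

section
/- For every integer N ≥ 3, all real β > 0, δ ∈ ℝ and θ > 0, the expected total cost of providing incentives satisfies (N²θ/2)·(H_N + 1/(N−1)) ≤ E(θ) ≤ N(N−1)·θ·(H_N + 1), where E denotes either E_r or E_p. -/
open Real Finset Filter Topology Matrix

/-- Transition matrix `U` between the transient states of the absorbing Markov chain,
for population size `N`, selection intensity `β`, payoff difference `δ` and incentive `θ`.
The index `i : Fin (N-1)` corresponds to the state with `i+1` cooperators;
`x = β(θ+δ)` and `p_i = i(N-i)/N²`. -/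
noncomputable def Umat (N : ℕ) (β δ θ : ℝ) : Matrix (Fin (N - 1)) (Fin (N - 1)) ℝ :=
  fun i j =>
    let x : ℝ := β * (θ + δ)
    let p : ℝ := ((i : ℕ) + 1 : ℝ) * ((N : ℝ) - ((i : ℕ) + 1 : ℝ)) / (N : ℝ) ^ 2
    if (j : ℕ) = (i : ℕ) + 1 then p / (1 + Real.exp (-x))
    else if (j : ℕ) + 1 = (i : ℕ) then p / (1 + Real.exp x)
    else if j = i then 1 - p / (1 + Real.exp (-x)) - p / (1 + Real.exp x)
    else 0

/-- The fundamental matrix `𝒩 = (I - U)⁻¹` of the absorbing Markov chain. -/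
noncomputable def fund (N : ℕ) (β δ θ : ℝ) : Matrix (Fin (N - 1)) (Fin (N - 1)) ℝ :=
  (1 - Umat N β δ θ)⁻¹

/-- Expected total cost of institutional reward,
`E_r(θ) = (θ/2) Σ_{i=1}^{N-1} (n_{1,i} + n_{N-1,i}) · i`
(row `1` is index `0` and row `N-1` is index `N-2`; junk value `0` for `N < 3`). -/
noncomputable def Ereward (N : ℕ) (β δ θ : ℝ) : ℝ :=
  if h : 3 ≤ N then
    (θ / 2) * ∑ j : Fin (N - 1),
      (fund N β δ θ ⟨0, by omega⟩ j + fund N β δ θ ⟨N - 2, by omega⟩ j) * ((j : ℕ) + 1 : ℝ)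
  else 0

/-- Expected total cost of institutional punishment,
`E_p(θ) = (θ/2) Σ_{i=1}^{N-1} (n_{1,i} + n_{N-1,i}) · (N - i)`. -/
noncomputable def Epunish (N : ℕ) (β δ θ : ℝ) : ℝ :=
  if h : 3 ≤ N then
    (θ / 2) * ∑ j : Fin (N - 1),
      (fund N β δ θ ⟨0, by omega⟩ j + fund N β δ θ ⟨N - 2, by omega⟩ j)
        * ((N : ℝ) - ((j : ℕ) + 1 : ℝ))
  else 0

/-- Harmonic number `H_N = Σ_{j=1}^{N-1} 1/j`. -/
noncomputable def harmonicNum (N : ℕ) : ℝ := ∑ j ∈ Finset.range (N - 1), (1 : ℝ) / ((j : ℕ) + 1)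

/-!
Write `a = exp (-x)` and `S k = 1 + a + ⋯ + a ^ (k - 1)`. Since `u_{i,i-1} = a u_{i,i+1}`, the
matrix `I - U` is the diagonal of the up-probabilities `u_{i,i+1}` times the operator
`f ↦ (1 + a) f i - f (i + 1) - a f (i - 1)` with Dirichlet conditions at `0` and `N`. Its inverse
is the Green's function `S (min i j) * (S N - S (max i j))` divided by `a ^ j * S N`, because both
branches are affine in `S i` and the kink at `i = j` has size `a ^ j * S N`. Hence
`n_{1,j} + n_{N-1,j} = (1 + a) N² (S (N-1) + a ^ (N-1-j)) / (S N · j (N - j))`, and both costs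
equal `θ/2 · (1 + a) N² / S N · ∑ⱼ (S (N-1) + a ^ (N-1-j)) / dⱼ`, where `dⱼ = N - j` for rewards
and `dⱼ = j` for punishment. That sum lies between `S (N-1) (H_N + 1/(N-1))` and
`S (N-1) (H_N + 1)`, and `S N ≤ (1 + a) S (N-1) ≤ 2 (N-1) S N / N`, the last because
`a ^ i + a ^ (n - i) ≤ 1 + a ^ n`.
-/

section Green

variable {s : ℕ → ℝ} {N I J : ℕ}

def green (s : ℕ → ℝ) (N I J : ℕ) : ℝ :=
  if I ≤ J then s I * (s N - s J) else s J * (s N - s I)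

lemma green_of_le (h : I ≤ J) : green s N I J = s I * (s N - s J) := if_pos h

lemma green_of_ge (h : J ≤ I) : green s N I J = s J * (s N - s I) := by
  rcases h.eq_or_lt with rfl | h
  · exact if_pos le_rfl
  · exact if_neg h.not_ge

lemma green_boundary_left (hs : s 0 = 0) : green s N 0 J = 0 := by
  simp [green_of_le, hs]

lemma green_boundary_right (h : J ≤ N) : green s N N J = 0 := by
  simp [green_of_ge h]

theorem green_recurrence {a : ℝ} (hs : ∀ I, s (I + 2) - s (I + 1) = a * (s (I + 1) - s I))
    (N I J : ℕ) :
    (1 + a) * green s N (I + 1) J - green s N (I + 2) J - a * green s N I J =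
      if I + 1 = J then s N * (s (I + 2) - s (I + 1)) else 0 := by
  rcases lt_trichotomy (I + 1) J with h | rfl | h
  · rw [green_of_le h.le, green_of_le h, green_of_le (by omega), if_neg h.ne]
    linear_combination (s J - s N) * hs I
  · rw [green_of_le le_rfl, green_of_ge (by omega), green_of_le (by omega), if_pos rfl]
    linear_combination (s (I + 1) - s N) * hs I
  · rw [green_of_ge (by omega), green_of_ge (by omega), green_of_ge (by omega), if_neg h.ne']
    linear_combination s J * hs I

end Green

section GeomSum

variable {a : ℝ} {m n : ℕ}

def geomSum (a : ℝ) (n : ℕ) : ℝ := ∑ i ∈ range n, a ^ i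

lemma geomSum_zero : geomSum a 0 = 0 := rfl

lemma geomSum_succ : geomSum a (n + 1) = geomSum a n + a ^ n := sum_range_succ _ _

lemma geomSum_add : geomSum a (m + n) = geomSum a m + a ^ m * geomSum a n := by
  simp [geomSum, sum_range_add, pow_add, mul_sum]

lemma geomSum_recurrence (a : ℝ) (n : ℕ) :
    geomSum a (n + 2) - geomSum a (n + 1) = a * (geomSum a (n + 1) - geomSum a n) := by
  simp only [geomSum_succ, pow_succ]
  ring

lemma geomSum_nonneg (ha : 0 ≤ a) : 0 ≤ geomSum a n := sum_nonneg fun i _ => pow_nonneg ha i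

lemma one_le_geomSum (ha : 0 ≤ a) (hn : 1 ≤ n) : 1 ≤ geomSum a n := by
  obtain ⟨n, rfl⟩ := Nat.exists_eq_add_of_le' hn
  rw [add_comm, geomSum_add, show geomSum a 1 = 1 by simp [geomSum], pow_one]
  exact le_add_of_nonneg_right (mul_nonneg ha (geomSum_nonneg ha))

lemma geomSum_pos (ha : 0 ≤ a) (hn : 1 ≤ n) : 0 < geomSum a n :=
  zero_lt_one.trans_le (one_le_geomSum ha hn)

lemma geomSum_succ_le_one_add_mul (ha : 0 ≤ a) (hn : 1 ≤ n) :
    geomSum a (n + 1) ≤ (1 + a) * geomSum a n := by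
  have h : geomSum a (n + 1) = a * geomSum a n + 1 := geom_sum_succ
  linarith [one_le_geomSum ha hn]

lemma pow_add_pow_le_one_add_pow (ha : 0 ≤ a) {i : ℕ} (hi : i ≤ n) :
    a ^ i + a ^ (n - i) ≤ 1 + a ^ n := by
  have hmul : a ^ i * a ^ (n - i) = a ^ n := by rw [← pow_add, Nat.add_sub_cancel' hi]
  have : 0 ≤ (1 - a ^ i) * (1 - a ^ (n - i)) := by
    rcases le_total a 1 with h | h
    · exact mul_nonneg (sub_nonneg.2 (pow_le_one₀ ha h)) (sub_nonneg.2 (pow_le_one₀ ha h))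
    · exact mul_nonneg_of_nonpos_of_nonpos (sub_nonpos.2 (one_le_pow₀ h))
        (sub_nonpos.2 (one_le_pow₀ h))
  nlinarith

lemma two_mul_geomSum_le (ha : 0 ≤ a) (n : ℕ) :
    2 * geomSum a (n + 1) ≤ (n + 1) * (1 + a ^ n) := by
  have hrefl : ∑ i ∈ range (n + 1), a ^ (n - i) = geomSum a (n + 1) := by
    simpa [geomSum] using sum_range_reflect (fun i => a ^ i) (n + 1)
  calc 2 * geomSum a (n + 1) = ∑ i ∈ range (n + 1), (a ^ i + a ^ (n - i)) := by
        rw [sum_add_distrib, hrefl, geomSum]; ring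
    _ ≤ ∑ i ∈ range (n + 1), (1 + a ^ n) :=
        sum_le_sum fun i hi => pow_add_pow_le_one_add_pow ha (by simp at hi; omega)
    _ = (n + 1) * (1 + a ^ n) := by simp; ring

lemma succ_mul_one_add_mul_geomSum_le (ha : 0 ≤ a) (n : ℕ) :
    (n + 1) * ((1 + a) * geomSum a n) ≤ 2 * n * geomSum a (n + 1) := by
  have h₁ : geomSum a (n + 1) = a * geomSum a n + 1 := geom_sum_succ
  have h₂ : geomSum a (n + 1) = geomSum a n + a ^ n := geomSum_succ
  nlinarith [two_mul_geomSum_le ha n]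

lemma green_geomSum_one_add_green_pred {N k : ℕ} (hk : k + 2 ≤ N) :
    green (geomSum a) N 1 (k + 1) + green (geomSum a) N (N - 1) (k + 1) =
      a ^ (k + 1) * (geomSum a (N - 1) + a ^ (N - 2 - k)) := by
  obtain ⟨m, rfl⟩ : ∃ m, N = m + (k + 1) + 1 := ⟨N - k - 2, by omega⟩
  rw [green_of_le (by omega), green_of_ge (by omega),
    show m + (k + 1) + 1 - 1 = m + (k + 1) by omega, show m + (k + 1) + 1 - 2 - k = m by omega]
  have h₁ : geomSum a (m + (k + 1)) = geomSum a m + a ^ m * geomSum a (k + 1) := geomSum_add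
  have h₂ : geomSum a (m + (k + 1)) = geomSum a (k + 1) + a ^ (k + 1) * geomSum a m := by
    rw [add_comm, geomSum_add]
  rw [geomSum_succ (n := m + (k + 1)), show geomSum a 1 = 1 by simp [geomSum], pow_add]
  linear_combination h₂ - a ^ (k + 1) * h₁

end GeomSum

section Tridiagonal

variable {R : Type*} [Ring R] {n m : ℕ}

def tridiag (n : ℕ) (l d u : ℕ → R) : Matrix (Fin n) (Fin n) R :=
  fun i j => if (j : ℕ) = i + 1 then u i else if (j : ℕ) + 1 = i then l i
    else if j = i then d i else 0

lemma one_sub_tridiag (l d u : ℕ → R) :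
    1 - tridiag n l d u = tridiag n (-l) (1 - d) (-u) := by
  ext i j
  simp only [tridiag, Matrix.sub_apply, Matrix.one_apply, Pi.neg_apply, Pi.sub_apply, Pi.one_apply]
  split_ifs <;> first | omega | (subst_vars; simp)

lemma sum_fin_ite_succ_eq {M : Type*} [AddCommMonoid M] (F : ℕ → M) {t : ℕ} (h0 : F 0 = 0)
    (hn : n < t → F t = 0) :
    ∑ j : Fin n, (if (j : ℕ) + 1 = t then F (j + 1) else 0) = F t := by
  rw [Fin.sum_univ_eq_sum_range (fun j => if j + 1 = t then F (j + 1) else 0)]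
  cases t with
  | zero => simp [h0]
  | succ t =>
    simp only [Nat.add_right_cancel_iff, Finset.sum_ite_eq', Finset.mem_range]
    split_ifs with h
    · rfl
    · exact (hn (by omega)).symm

lemma tridiag_mul_apply (l d u : ℕ → R) (M : Matrix (Fin n) (Fin m) R) (g : ℕ → Fin m → R)
    (hM : ∀ i k, M i k = g (i + 1) k) (h0 : g 0 = 0) (hn : g (n + 1) = 0) (i : Fin n)
    (k : Fin m) :
    (tridiag n l d u * M) i k = l i * g i k + d i * g (i + 1) k + u i * g (i + 2) k := by
  have hsplit : ∀ j : Fin n, tridiag n l d u i j * M j k =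
      (if (j : ℕ) + 1 = i then l i * g (j + 1) k else 0) +
      (if (j : ℕ) + 1 = i + 1 then d i * g (j + 1) k else 0) +
      (if (j : ℕ) + 1 = i + 2 then u i * g (j + 1) k else 0) := by
    intro j
    simp only [tridiag, hM, Fin.ext_iff]
    split_ifs <;> first | omega | simp
  simp only [Matrix.mul_apply, hsplit, Finset.sum_add_distrib]
  have hi := i.isLt
  rw [sum_fin_ite_succ_eq (fun t => l i * g t k) (by simp [h0]) (fun _ => by omega),
    sum_fin_ite_succ_eq (fun t => d i * g t k) (by simp [h0]) (fun _ => by omega),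
    sum_fin_ite_succ_eq (fun t => u i * g t k) (by simp [h0])
      (fun _ => by simp [show (i : ℕ) + 2 = n + 1 by omega, hn])]

end Tridiagonal

noncomputable section Model

variable {N : ℕ} {x : ℝ}

/-- `p_{i+1}` of the paper: index `i` stands for the state with `i + 1` cooperators. -/
def mixedPairProb (N i : ℕ) : ℝ :=
  ((i : ℝ) + 1) * ((N : ℝ) - ((i : ℝ) + 1)) / (N : ℝ) ^ 2

def upProb (N : ℕ) (x : ℝ) (i : ℕ) : ℝ := mixedPairProb N i / (1 + exp (-x))

def downProb (N : ℕ) (x : ℝ) (i : ℕ) : ℝ := mixedPairProb N i / (1 + exp x)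

lemma Umat_eq_tridiag (N : ℕ) (β δ θ : ℝ) :
    Umat N β δ θ = tridiag (N - 1) (downProb N (β * (θ + δ)))
      (fun i => 1 - upProb N (β * (θ + δ)) i - downProb N (β * (θ + δ)) i)
      (upProb N (β * (θ + δ))) := rfl

lemma downProb_eq (N : ℕ) (x : ℝ) (i : ℕ) : downProb N x i = exp (-x) * upProb N x i := by
  rw [downProb, upProb, exp_neg]
  field_simp
  ring

lemma upProb_pos {i : ℕ} (hi : i + 1 < N) : 0 < upProb N x i := by
  have hiN : (i : ℝ) + 1 < N := by exact_mod_cast hi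
  have : 0 < (N : ℝ) - ((i : ℝ) + 1) := by linarith
  have : (0 : ℝ) < N := by linarith
  unfold upProb mixedPairProb
  positivity

def greenMatrix (N : ℕ) (x : ℝ) : Matrix (Fin (N - 1)) (Fin (N - 1)) ℝ :=
  fun i k => green (geomSum (exp (-x))) N (i + 1) (k + 1) /
    (upProb N x k * exp (-x) ^ ((k : ℕ) + 1) * geomSum (exp (-x)) N)

theorem one_sub_Umat_mul_greenMatrix (hN : 1 ≤ N) (β δ θ : ℝ) :
    (1 - Umat N β δ θ) * greenMatrix N (β * (θ + δ)) = 1 := by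
  rw [Umat_eq_tridiag, one_sub_tridiag]
  set x := β * (θ + δ)
  set a := exp (-x)
  set G : ℕ → ℕ → ℝ := fun t k => green (geomSum a) N t (k + 1)
  set c : ℕ → ℝ := fun k => upProb N x k * a ^ (k + 1) * geomSum a N
  ext i k
  have hk := k.isLt
  rw [tridiag_mul_apply _ _ _ (greenMatrix N x) (fun t k => G t k / c k) (fun _ _ => rfl)
      (by ext; simp [G, green_boundary_left geomSum_zero])
      (by ext j; simp [G, show N - 1 + 1 = N by omega,
        green_boundary_right (show (j : ℕ) + 1 ≤ N by omega)])]
  have hrec := green_recurrence (geomSum_recurrence a) N i (k + 1)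
  rw [geomSum_succ (n := (i : ℕ) + 1), add_sub_cancel_left] at hrec
  calc _ = upProb N x i / c k *
        ((1 + a) * G (i + 1) k - G (i + 2) k - a * G i k) := by
        simp only [Pi.neg_apply, Pi.sub_apply, Pi.one_apply, downProb_eq]
        ring
    _ = _ := by
      rw [hrec, Matrix.one_apply]
      by_cases h : i = k
      · subst h
        have hup : upProb N x i ≠ 0 := (upProb_pos (by omega)).ne'
        have hS : geomSum a N ≠ 0 := (geomSum_pos (exp_pos _).le hN).ne'
        have ha : a ≠ 0 := exp_ne_zero _
        simp only [c, if_pos]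
        field_simp
      · simp [h, Fin.val_eq_val]

end Model

noncomputable section Costs

variable {N : ℕ}

theorem fund_eq_greenMatrix (hN : 1 ≤ N) (β δ θ : ℝ) :
    fund N β δ θ = greenMatrix N (β * (θ + δ)) :=
  inv_eq_right_inv (one_sub_Umat_mul_greenMatrix hN β δ θ)

lemma fund_zero_add_fund_last (β δ θ : ℝ) (h₀ : 0 < N - 1) (h₁ : N - 2 < N - 1)
    (k : Fin (N - 1)) :
    fund N β δ θ ⟨0, h₀⟩ k + fund N β δ θ ⟨N - 2, h₁⟩ k =
      (1 + exp (-(β * (θ + δ)))) * (N : ℝ) ^ 2 *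
        (geomSum (exp (-(β * (θ + δ)))) (N - 1) + exp (-(β * (θ + δ))) ^ (N - 2 - k)) /
          (geomSum (exp (-(β * (θ + δ)))) N *
            (((k : ℝ) + 1) * ((N : ℝ) - ((k : ℝ) + 1)))) := by
  have hk := k.isLt
  rw [fund_eq_greenMatrix (by omega)]
  simp only [greenMatrix, zero_add, show N - 2 + 1 = N - 1 by omega]
  rw [← add_div, green_geomSum_one_add_green_pred (by omega), upProb, mixedPairProb]
  have : (N : ℝ) ≠ 0 := by exact_mod_cast (show N ≠ 0 by omega)
  have : geomSum (exp (-(β * (θ + δ)))) N ≠ 0 :=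
    (geomSum_pos (exp_pos _).le (by omega)).ne'
  field_simp

def costSum (a : ℝ) (N : ℕ) (den : ℕ → ℝ) : ℝ :=
  (1 + a) * (N : ℝ) ^ 2 / geomSum a N *
    ∑ t ∈ range (N - 1), (geomSum a (N - 1) + a ^ (N - 2 - t)) / den t

theorem Ereward_eq (hN : 3 ≤ N) (β δ θ : ℝ) :
    Ereward N β δ θ =
      θ / 2 * costSum (exp (-(β * (θ + δ)))) N (fun t => (N : ℝ) - ((t : ℝ) + 1)) := by
  rw [Ereward, dif_pos hN, costSum]
  congr 1
  rw [sum_range, mul_sum]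
  refine sum_congr rfl fun k _ => ?_
  rw [fund_zero_add_fund_last]
  have : (k : ℝ) + 1 ≠ 0 := by positivity
  field_simp

theorem Epunish_eq (hN : 3 ≤ N) (β δ θ : ℝ) :
    Epunish N β δ θ = θ / 2 * costSum (exp (-(β * (θ + δ)))) N (fun t => (t : ℝ) + 1) := by
  rw [Epunish, dif_pos hN, costSum]
  congr 1
  rw [sum_range, mul_sum]
  refine sum_congr rfl fun k _ => ?_
  rw [fund_zero_add_fund_last]
  have hk : (k : ℝ) + 2 ≤ N := by exact_mod_cast (show (k : ℕ) + 2 ≤ N by omega)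
  have : (N : ℝ) - ((k : ℝ) + 1) ≠ 0 := by linarith
  field_simp

end Costs

section Bounds

variable {a θ : ℝ} {N : ℕ}

lemma sum_geom_add_pow_div_bounds (ha : 0 ≤ a) (den : ℕ → ℝ)
    (h₁ : ∀ t < N - 1, 1 ≤ den t) (h₂ : ∀ t < N - 1, den t ≤ (N : ℝ) - 1) :
    geomSum a (N - 1) * (∑ t ∈ range (N - 1), 1 / den t + 1 / ((N : ℝ) - 1)) ≤
        ∑ t ∈ range (N - 1), (geomSum a (N - 1) + a ^ (N - 2 - t)) / den t ∧
      ∑ t ∈ range (N - 1), (geomSum a (N - 1) + a ^ (N - 2 - t)) / den t ≤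
        geomSum a (N - 1) * (∑ t ∈ range (N - 1), 1 / den t + 1) := by
  have hw : ∑ t ∈ range (N - 1), a ^ (N - 2 - t) = geomSum a (N - 1) := by
    simpa [geomSum, Nat.sub_sub] using sum_range_reflect (fun i => a ^ i) (N - 1)
  have hsplit : ∑ t ∈ range (N - 1), (geomSum a (N - 1) + a ^ (N - 2 - t)) / den t =
      geomSum a (N - 1) * ∑ t ∈ range (N - 1), 1 / den t +
        ∑ t ∈ range (N - 1), a ^ (N - 2 - t) / den t := by
    rw [mul_sum, ← sum_add_distrib]
    exact sum_congr rfl fun t _ => by ring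
  have hlow :
      geomSum a (N - 1) / ((N : ℝ) - 1) ≤ ∑ t ∈ range (N - 1), a ^ (N - 2 - t) / den t := by
    rw [← hw, sum_div]
    refine sum_le_sum fun t ht => ?_
    rw [mem_range] at ht
    exact div_le_div_of_nonneg_left (pow_nonneg ha _) (one_pos.trans_le (h₁ t ht)) (h₂ t ht)
  have hupp : ∑ t ∈ range (N - 1), a ^ (N - 2 - t) / den t ≤ geomSum a (N - 1) := by
    rw [← hw]
    exact sum_le_sum fun t ht => div_le_self (pow_nonneg ha _) (h₁ t (mem_range.1 ht))
  rw [hsplit, mul_add, mul_add, mul_one_div, mul_one]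
  exact ⟨by linarith, by linarith⟩

theorem incentive_cost_bounds (ha : 0 < a) (hN : 2 ≤ N) (hθ : 0 ≤ θ) (den : ℕ → ℝ)
    (h₁ : ∀ t < N - 1, 1 ≤ den t) (h₂ : ∀ t < N - 1, den t ≤ (N : ℝ) - 1)
    (hH : ∑ t ∈ range (N - 1), 1 / den t = harmonicNum N) :
    (N : ℝ) ^ 2 * θ / 2 * (harmonicNum N + 1 / ((N : ℝ) - 1)) ≤ θ / 2 * costSum a N den ∧
      θ / 2 * costSum a N den ≤ (N : ℝ) * ((N : ℝ) - 1) * θ * (harmonicNum N + 1) := by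
  unfold costSum
  obtain ⟨hlow, hupp⟩ := sum_geom_add_pow_div_bounds ha.le den h₁ h₂
  rw [hH] at hlow hupp
  have hN' : (2 : ℝ) ≤ N := by exact_mod_cast hN
  have hNsub : ((N - 1 : ℕ) : ℝ) = N - 1 := by rw [Nat.cast_sub (by omega), Nat.cast_one]
  have hSN : 0 < geomSum a N := geomSum_pos ha.le (by omega)
  have hS : 0 ≤ geomSum a (N - 1) := geomSum_nonneg ha.le
  have hH₀ : 0 ≤ harmonicNum N := sum_nonneg fun j _ => by positivity
  have hr₁ : geomSum a N ≤ (1 + a) * geomSum a (N - 1) := by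
    simpa [Nat.sub_add_cancel (by omega : 1 ≤ N)] using
      geomSum_succ_le_one_add_mul ha.le (show 1 ≤ N - 1 by omega)
  have hr₂ : (N : ℝ) * ((1 + a) * geomSum a (N - 1)) ≤ 2 * ((N : ℝ) - 1) * geomSum a N := by
    simpa [hNsub, Nat.sub_add_cancel (by omega : 1 ≤ N)] using
      succ_mul_one_add_mul_geomSum_le ha.le (N - 1)
  constructor
  · have : 0 ≤ 1 / ((N : ℝ) - 1) := one_div_nonneg.2 (by linarith)
    calc (N : ℝ) ^ 2 * θ / 2 * (harmonicNum N + 1 / ((N : ℝ) - 1))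
        = θ / 2 * ((N : ℝ) ^ 2 * 1 * (harmonicNum N + 1 / ((N : ℝ) - 1))) := by ring
      _ ≤ θ / 2 * ((N : ℝ) ^ 2 * ((1 + a) * geomSum a (N - 1) / geomSum a N) *
            (harmonicNum N + 1 / ((N : ℝ) - 1))) := by
          gcongr
          rwa [le_div_iff₀ hSN, one_mul]
      _ = θ / 2 * ((1 + a) * (N : ℝ) ^ 2 / geomSum a N *
            (geomSum a (N - 1) * (harmonicNum N + 1 / ((N : ℝ) - 1)))) := by ring
      _ ≤ _ := by gcongr
  · calc θ / 2 * ((1 + a) * (N : ℝ) ^ 2 / geomSum a N *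
          ∑ t ∈ range (N - 1), (geomSum a (N - 1) + a ^ (N - 2 - t)) / den t)
        ≤ θ / 2 * ((1 + a) * (N : ℝ) ^ 2 / geomSum a N *
            (geomSum a (N - 1) * (harmonicNum N + 1))) := by
          gcongr
      _ = θ / 2 * (N : ℝ) * ((N : ℝ) * ((1 + a) * geomSum a (N - 1)) / geomSum a N) *
            (harmonicNum N + 1) := by ring
      _ ≤ θ / 2 * (N : ℝ) * (2 * ((N : ℝ) - 1)) * (harmonicNum N + 1) := by
          gcongr
          rwa [div_le_iff₀ hSN]
      _ = (N : ℝ) * ((N : ℝ) - 1) * θ * (harmonicNum N + 1) := by ring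

end Bounds

lemma harmonicNum_eq_sum_one_div_sub (N : ℕ) :
    harmonicNum N = ∑ t ∈ range (N - 1), 1 / ((N : ℝ) - ((t : ℝ) + 1)) := by
  rw [harmonicNum, ← sum_range_reflect]
  refine sum_congr rfl fun t ht => ?_
  have ht : t + 2 ≤ N := by rw [mem_range] at ht; omega
  rw [show N - 1 - 1 - t = N - (t + 2) by omega, Nat.cast_sub ht]
  push_cast
  ring

theorem finite_population_estimates_general (N : ℕ) (hN : 3 ≤ N) (β δ θ : ℝ)
    (hθ : 0 < θ) :
    ((N : ℝ) ^ 2 * θ / 2) * (harmonicNum N + 1 / ((N : ℝ) - 1)) ≤ Ereward N β δ θ ∧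
    Ereward N β δ θ ≤ (N : ℝ) * ((N : ℝ) - 1) * θ * (harmonicNum N + 1) ∧
    ((N : ℝ) ^ 2 * θ / 2) * (harmonicNum N + 1 / ((N : ℝ) - 1)) ≤ Epunish N β δ θ ∧
    Epunish N β δ θ ≤ (N : ℝ) * ((N : ℝ) - 1) * θ * (harmonicNum N + 1) := by
  have hlow : ∀ t : ℕ, t < N - 1 → 1 ≤ (t : ℝ) + 1 := fun t _ =>
    le_add_of_nonneg_left t.cast_nonneg
  have hupp : ∀ t : ℕ, t < N - 1 → (t : ℝ) + 1 ≤ N - 1 := fun t ht => by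
    have : (t : ℝ) + 2 ≤ N := by exact_mod_cast (by omega : t + 2 ≤ N)
    linarith
  obtain ⟨hr₁, hr₂⟩ := incentive_cost_bounds (exp_pos _) (by omega) hθ.le
    (fun t => (N : ℝ) - ((t : ℝ) + 1)) (fun t ht => by linarith [hupp t ht])
    (fun t ht => by linarith [hlow t ht]) (harmonicNum_eq_sum_one_div_sub N).symm
  obtain ⟨hp₁, hp₂⟩ := incentive_cost_bounds (exp_pos _) (by omega) hθ.le
    (fun t => (t : ℝ) + 1) hlow hupp rfl
  rw [Ereward_eq hN, Epunish_eq hN]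
  exact ⟨hr₁, hr₂, hp₁, hp₂⟩

/-- For every integer N ≥ 3, all real β > 0, δ ∈ ℝ and θ > 0,
(N²θ/2)·(H_N + 1/(N−1)) ≤ E(θ) ≤ N(N−1)·θ·(H_N + 1), where E is either E_r or E_p. -/
theorem finite_population_estimates (N : ℕ) (hN : 3 ≤ N) (β δ θ : ℝ) (hβ : 0 < β)
    (hθ : 0 < θ) :
    ((N : ℝ) ^ 2 * θ / 2) * (harmonicNum N + 1 / ((N : ℝ) - 1)) ≤ Ereward N β δ θ ∧
    Ereward N β δ θ ≤ (N : ℝ) * ((N : ℝ) - 1) * θ * (harmonicNum N + 1) ∧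
    ((N : ℝ) ^ 2 * θ / 2) * (harmonicNum N + 1 / ((N : ℝ) - 1)) ≤ Epunish N β δ θ ∧
    Epunish N β δ θ ≤ (N : ℝ) * ((N : ℝ) - 1) * θ * (harmonicNum N + 1) :=
  finite_population_estimates_general N hN β δ θ hθ
end

section
/- For every integer N ≥ 3, all real β > 0, δ ∈ ℝ and θ > 0: E_r(θ) < E_p(θ) if θ < −δ; E_r(θ) = E_p(θ) if θ = −δ; and E_r(θ) > E_p(θ) if θ > −δ. -/
open Real Finset Filter Topology Matrix

/-!
Put `x = β(θ + δ)` and `r = e^{-x}`. The matrix `I - U` factors as `diag(λ) · L`, where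
`λ_m = p_m / (1 + e^{-x})` is the probability of a step up from state `m` and `L` is the tridiagonal
matrix of a biased walk (`1 + r` on the diagonal, `-1` above it, `-r` below it). Hence
`n_{1,m} + n_{N-1,m} = h_m / λ_m`, where the row vector `h` solves `h L = e_1 + e_{N-1}`. That `h` is
explicit: `h_m = 1 + (e^{xm} - 1) / (1 + e^x + ⋯ + e^{(N-1)x})` is the walk-harmonic function with
boundary values `1` at `0` and `e^x` at `N`. So `E_r - E_p = (θ/2) Σ_m h_m (2m - N) / λ_m`. The weight
`(2m - N) / λ_m` is antisymmetric under `m ↦ N - m`; pairing `m` with `N - m` leaves terms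
proportional to `(e^{xm} - e^{x(N-m)}) (2m - N)`, which by monotonicity of `exp` all have the sign
of `x`, the term `m = N - 1` strictly.
-/

-- Minus the generator of the walk on the states `1, …, n` (index `i` is state `i + 1`) with rate `1`
-- up and rate `r` down, killed at `0` and `n + 1`.
def walkMatrix (n : ℕ) (r : ℝ) : Matrix (Fin n) (Fin n) ℝ := fun i j =>
  if (j : ℕ) = i + 1 then -1 else if (j : ℕ) + 1 = i then -r else if j = i then 1 + r else 0

theorem vecMul_walkMatrix {n : ℕ} (r : ℝ) (φ : ℕ → ℝ) (j : Fin n) :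
    ((fun i : Fin n => φ (i + 1)) ᵥ* walkMatrix n r) j =
      (1 + r) * φ (j + 1) - (if (j : ℕ) = 0 then 0 else φ j)
        - (if (j : ℕ) + 1 = n then 0 else r * φ (j + 2)) := by
  obtain ⟨j, hj⟩ := j
  have entry : ∀ k, φ (k + 1) * (if j = k + 1 then -1 else if j + 1 = k then -r
      else if j = k then 1 + r else 0) =
      -(if j ≠ 0 then if k = j - 1 then φ j else 0 else 0)
        - (if k = j + 1 then r * φ (j + 2) else 0) + (if k = j then (1 + r) * φ (j + 1) else 0) := by
    intro k
    split_ifs <;> subst_vars <;> first | omega | ring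
  simp only [vecMul, dotProduct, walkMatrix, Fin.ext_iff]
  rw [Fin.sum_univ_eq_sum_range (fun k => φ (k + 1) * (if j = k + 1 then -1 else if j + 1 = k then -r
      else if j = k then 1 + r else 0)), sum_congr rfl (fun k _ => entry k),
    sum_add_distrib, sum_sub_distrib, sum_neg_distrib, sum_ite_irrel,
    sum_ite_eq', sum_ite_eq', sum_ite_eq']
  simp only [mem_range, sum_const_zero]
  split_ifs <;> first | omega | ring

theorem eq_zero_of_walk_harmonic {n : ℕ} {r : ℝ} (hr : 0 ≤ r) {φ : ℕ → ℝ}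
    (h0 : φ 0 = 0) (hn : φ (n + 1) = 0)
    (hφ : ∀ m < n, (1 + r) * φ (m + 1) = φ m + r * φ (m + 2)) :
    ∀ m ≤ n + 1, φ m = 0 := by
  -- the flux `φ m - r φ (m + 1)` is constant, so `φ (n + 1 - k) = φ n (1 + r + ⋯ + r ^ (k - 1))`
  have flux : ∀ m ≤ n, φ m - r * φ (m + 1) = φ n := by
    intro m hm
    induction hm using Nat.decreasingInduction with
    | self => simp [hn]
    | of_succ k hk ih => linarith [hφ k hk]
  have closed : ∀ k ≤ n + 1, φ (n + 1 - k) = φ n * ∑ i ∈ range k, r ^ i := by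
    intro k hk
    induction k with
    | zero => simp [hn]
    | succ k ih =>
      have step := flux (n - k) (by omega)
      rw [show n - k + 1 = n + 1 - k by omega, ih (by omega)] at step
      rw [show n + 1 - (k + 1) = n - k by omega, geom_sum_succ]
      linear_combination step
  have hc : φ n = 0 := by
    have h := closed (n + 1) le_rfl
    rw [Nat.sub_self, h0] at h
    exact (mul_eq_zero.mp h.symm).resolve_right (geom_sum_pos hr (Nat.succ_ne_zero n)).ne'
  intro m hm
  rw [show m = n + 1 - (n + 1 - m) by omega, closed _ (by omega), hc, zero_mul]

theorem det_walkMatrix_ne_zero {n : ℕ} {r : ℝ} (hr : 0 ≤ r) : (walkMatrix n r).det ≠ 0 := by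
  intro hdet
  obtain ⟨y, hy0, hy⟩ := exists_vecMul_eq_zero_iff.mpr hdet
  set φ : ℕ → ℝ := fun m => if h : 1 ≤ m ∧ m ≤ n then y ⟨m - 1, by omega⟩ else 0
  have hyφ : y = fun i : Fin n => φ (i + 1) := funext fun i => by simp [φ, i.isLt]
  have h0 : φ 0 = 0 := by simp [φ]
  have hn : φ (n + 1) = 0 := by simp [φ]
  have harm : ∀ m < n, (1 + r) * φ (m + 1) = φ m + r * φ (m + 2) := by
    intro m hm
    have h := congrFun hy ⟨m, hm⟩
    rw [hyφ, vecMul_walkMatrix] at h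
    simp only [Pi.zero_apply] at h
    have left : (if m = 0 then 0 else φ m) = φ m := by
      split_ifs with hm0
      · rw [hm0, h0]
      · rfl
    have right : (if m + 1 = n then 0 else r * φ (m + 2)) = r * φ (m + 2) := by
      split_ifs with hmn
      · rw [show m + 2 = n + 1 by omega, hn, mul_zero]
      · rfl
    rw [left, right] at h
    linarith
  refine hy0 (funext fun i => ?_)
  rw [hyφ]
  exact eq_zero_of_walk_harmonic hr h0 hn harm _ (by omega)

theorem sum_mul_of_antisymm {ι R : Type*} [Fintype ι] [CommRing R] (σ : Equiv.Perm ι)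
    (h q : ι → R) (hq : ∀ i, q (σ i) = -q i) :
    2 * ∑ i, h i * q i = ∑ i, (h i - h (σ i)) * q i := by
  have hσ : ∑ i, h (σ i) * q i = -∑ i, h i * q i := by
    rw [← Equiv.sum_comp σ (fun i => h i * q i), ← sum_neg_distrib]
    exact sum_congr rfl fun i _ => by rw [hq, mul_neg, neg_neg]
  simp only [sub_mul, sum_sub_distrib, hσ]
  ring

theorem exp_sub_exp_mul_sub_pos {a b : ℝ} (h : a ≠ b) : 0 < (exp a - exp b) * (a - b) := by
  rcases h.lt_or_gt with h | h
  · exact mul_pos_of_neg_of_neg (sub_neg.2 (exp_lt_exp.2 h)) (sub_neg.2 h)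
  · exact mul_pos (sub_pos.2 (exp_lt_exp.2 h)) (sub_pos.2 h)

theorem div_one_add_exp (p x : ℝ) : p / (1 + exp x) = p / (1 + exp (-x)) * exp (-x) := by
  rw [exp_neg]
  field_simp
  ring

noncomputable def birthProb (N : ℕ) (x t : ℝ) : ℝ := t * (N - t) / N ^ 2 / (1 + exp (-x))

theorem birthProb_pos {N : ℕ} (x : ℝ) {t : ℝ} (ht0 : 0 < t) (htN : t < N) : 0 < birthProb N x t := by
  have hN : (0 : ℝ) < N := ht0.trans htN
  unfold birthProb
  have := sub_pos.2 htN
  positivity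

theorem birthProb_reflect (N : ℕ) (x t : ℝ) : birthProb N x (N - t) = birthProb N x t := by
  unfold birthProb
  ring

theorem one_sub_Umat (N : ℕ) (β δ θ : ℝ) :
    1 - Umat N β δ θ = diagonal (fun i : Fin (N - 1) => birthProb N (β * (θ + δ)) ((i : ℕ) + 1))
      * walkMatrix (N - 1) (exp (-(β * (θ + δ)))) := by
  ext i j
  simp only [Matrix.sub_apply, one_apply, diagonal_mul, Umat, walkMatrix, birthProb, Fin.ext_iff]
  split_ifs <;> first | omega | ring1 | (rw [div_one_add_exp _ (β * (θ + δ))]; ring1)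

theorem fund_apply (N : ℕ) (β δ θ : ℝ) (i j : Fin (N - 1)) :
    fund N β δ θ i j = (walkMatrix (N - 1) (exp (-(β * (θ + δ)))))⁻¹ i j
      / birthProb N (β * (θ + δ)) ((j : ℕ) + 1) := by
  set b := fun k : Fin (N - 1) => birthProb N (β * (θ + δ)) ((k : ℕ) + 1)
  have hb : ∀ k, b k ≠ 0 := fun k => (birthProb_pos _ (by positivity) (by
    have := k.isLt
    have : (k : ℕ) + 1 < N := by omega
    exact_mod_cast this)).ne'
  have hinv : (diagonal b)⁻¹ = diagonal fun k => (b k)⁻¹ := by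
    refine inv_eq_left_inv ?_
    rw [diagonal_mul_diagonal, ← diagonal_one]
    exact congrArg diagonal (funext fun k => inv_mul_cancel₀ (hb k))
  rw [fund, one_sub_Umat, Matrix.mul_inv_rev, hinv, mul_diagonal, div_eq_mul_inv]

noncomputable def walkHarmonic (N : ℕ) (x t : ℝ) : ℝ :=
  1 + (exp (x * t) - 1) / ∑ k ∈ range N, exp x ^ k

theorem walkHarmonic_zero (N : ℕ) (x : ℝ) : walkHarmonic N x 0 = 1 := by
  simp [walkHarmonic]

theorem walkHarmonic_self {N : ℕ} (hN : N ≠ 0) (x : ℝ) : walkHarmonic N x N = exp x := by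
  have hS := (geom_sum_pos (exp_pos x).le hN).ne'
  rw [walkHarmonic, mul_comm, exp_nat_mul, ← geom_sum_mul, mul_div_cancel_left₀ _ hS]
  ring

theorem walkHarmonic_harmonic (N : ℕ) (x t : ℝ) :
    (1 + exp (-x)) * walkHarmonic N x t
      = walkHarmonic N x (t - 1) + exp (-x) * walkHarmonic N x (t + 1) := by
  simp only [walkHarmonic, mul_sub, mul_add, mul_one, exp_add, exp_sub, exp_neg]
  field_simp
  ring

theorem vecMul_walkMatrix_walkHarmonic {N : ℕ} (hN : 2 ≤ N) (x : ℝ) :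
    (fun i : Fin (N - 1) => walkHarmonic N x ((i : ℕ) + 1)) ᵥ* walkMatrix (N - 1) (exp (-x))
      = Pi.single ⟨0, by omega⟩ 1 + Pi.single ⟨N - 2, by omega⟩ 1 := by
  funext j
  have h := vecMul_walkMatrix (exp (-x)) (fun m : ℕ => walkHarmonic N x m) j
  push_cast at h
  have first : (if (j : ℕ) = 0 then 0 else walkHarmonic N x (j : ℕ))
      = walkHarmonic N x (j : ℕ) - if (j : ℕ) = 0 then 1 else 0 := by
    split_ifs with hj
    · rw [hj, Nat.cast_zero, walkHarmonic_zero, sub_self]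
    · rw [sub_zero]
  have last : (if (j : ℕ) + 1 = N - 1 then 0 else exp (-x) * walkHarmonic N x ((j : ℕ) + 2))
      = exp (-x) * walkHarmonic N x ((j : ℕ) + 2) - if (j : ℕ) = N - 2 then 1 else 0 := by
    by_cases hj : (j : ℕ) = N - 2
    · rw [if_pos (by omega), if_pos hj, show ((j : ℕ) : ℝ) + 2 = ((N : ℕ) : ℝ) by norm_cast; omega,
        walkHarmonic_self (by omega), ← exp_add, neg_add_cancel, exp_zero, sub_self]
    · rw [if_neg (by omega), if_neg hj, sub_zero]
  rw [h, first, last, walkHarmonic_harmonic N x ((j : ℕ) + 1), add_sub_cancel_right,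
    show (j : ℝ) + 1 + 1 = (j : ℝ) + 2 by ring]
  simp only [Pi.add_apply, Pi.single_apply, Fin.ext_iff]
  ring

theorem walkMatrix_inv_first_add_last {N : ℕ} (hN : 3 ≤ N) (x : ℝ) (j : Fin (N - 1)) :
    (walkMatrix (N - 1) (exp (-x)))⁻¹ ⟨0, by omega⟩ j
      + (walkMatrix (N - 1) (exp (-x)))⁻¹ ⟨N - 2, by omega⟩ j = walkHarmonic N x ((j : ℕ) + 1) := by
  have hL : IsUnit (walkMatrix (N - 1) (exp (-x))).det :=
    (det_walkMatrix_ne_zero (exp_pos _).le).isUnit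
  have h := congrArg (fun v => (v ᵥ* (walkMatrix (N - 1) (exp (-x)))⁻¹) j)
    (vecMul_walkMatrix_walkHarmonic (by omega : 2 ≤ N) x)
  simp only [vecMul_vecMul, mul_nonsing_inv _ hL, vecMul_one, add_vecMul, single_one_vecMul,
    Pi.add_apply, row_apply] at h
  exact h.symm

theorem Ereward_sub_Epunish {N : ℕ} (hN : 3 ≤ N) (β δ θ : ℝ) :
    Ereward N β δ θ - Epunish N β δ θ = θ / 2 * ∑ j : Fin (N - 1),
      walkHarmonic N (β * (θ + δ)) ((j : ℕ) + 1)
        * ((2 * ((j : ℕ) + 1) - N) / birthProb N (β * (θ + δ)) ((j : ℕ) + 1)) := by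
  rw [Ereward, Epunish, dif_pos hN, dif_pos hN, ← mul_sub, ← sum_sub_distrib]
  congr 1
  refine sum_congr rfl fun j _ => ?_
  rw [fund_apply, fund_apply, ← walkMatrix_inv_first_add_last hN]
  ring

theorem cast_rev_add_one {N : ℕ} (j : Fin (N - 1)) :
    ((Fin.revPerm j : ℕ) : ℝ) + 1 = N - ((j : ℕ) + 1) := by
  have := j.isLt
  rw [Fin.revPerm_apply, Fin.val_rev, Nat.cast_sub (by omega), Nat.cast_sub (by omega)]
  push_cast
  ring

noncomputable def pairedSum (N : ℕ) (x : ℝ) : ℝ :=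
  ∑ j : Fin (N - 1), (walkHarmonic N x ((j : ℕ) + 1) - walkHarmonic N x (N - ((j : ℕ) + 1)))
    * ((2 * ((j : ℕ) + 1) - N) / birthProb N x ((j : ℕ) + 1))

theorem Ereward_sub_Epunish_eq_pairedSum {N : ℕ} (hN : 3 ≤ N) (β δ θ : ℝ) :
    Ereward N β δ θ - Epunish N β δ θ = θ / 4 * pairedSum N (β * (θ + δ)) := by
  set x := β * (θ + δ)
  have pairing := sum_mul_of_antisymm Fin.revPerm
    (fun j : Fin (N - 1) => walkHarmonic N x ((j : ℕ) + 1))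
    (fun j => (2 * ((j : ℕ) + 1) - N) / birthProb N x ((j : ℕ) + 1))
    (fun j => by simp only [cast_rev_add_one, birthProb_reflect]; ring)
  simp only [cast_rev_add_one] at pairing
  rw [Ereward_sub_Epunish hN, pairedSum, ← pairing]
  ring

theorem pairedSum_zero (N : ℕ) : pairedSum N 0 = 0 := by
  simp [pairedSum, walkHarmonic]

theorem mul_walkHarmonic_pair (N : ℕ) (x t : ℝ) :
    x * ((walkHarmonic N x t - walkHarmonic N x (N - t)) * ((2 * t - N) / birthProb N x t))
      = (exp (x * t) - exp (x * (N - t))) * (x * t - x * (N - t))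
        / ((∑ k ∈ range N, exp x ^ k) * birthProb N x t) := by
  unfold walkHarmonic
  ring

theorem mul_pairedSum_pos {N : ℕ} (hN : 3 ≤ N) {x : ℝ} (hx : x ≠ 0) : 0 < x * pairedSum N x := by
  have hS : 0 < ∑ k ∈ range N, exp x ^ k := geom_sum_pos (exp_pos x).le (by omega)
  have hb : ∀ j : Fin (N - 1), 0 < birthProb N x ((j : ℕ) + 1) := fun j => by
    have : (j : ℕ) + 1 < N := by omega
    exact birthProb_pos x (by positivity) (by exact_mod_cast this)
  rw [pairedSum, mul_sum]
  refine sum_pos' (fun j _ => ?_) ⟨⟨N - 2, by omega⟩, mem_univ _, ?_⟩ <;>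
    rw [mul_walkHarmonic_pair]
  · refine div_nonneg ?_ (mul_pos hS (hb j)).le
    rcases eq_or_ne (x * ((j : ℕ) + 1)) (x * (N - ((j : ℕ) + 1))) with h | h
    · rw [h, sub_self, sub_self, mul_zero]
    · exact (exp_sub_exp_mul_sub_pos h).le
  · refine div_pos (exp_sub_exp_mul_sub_pos fun h => ?_) (mul_pos hS (hb _))
    have h3 : (3 : ℝ) ≤ N := by exact_mod_cast hN
    have : ((N - 2 : ℕ) : ℝ) = N - 2 := by push_cast [Nat.cast_sub (by omega : 2 ≤ N)]; ring
    simp only [this] at h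
    have := mul_left_cancel₀ hx h
    linarith

/-- For every integer N ≥ 3, all real β > 0, δ ∈ ℝ and θ > 0:
E_r(θ) < E_p(θ) if θ < −δ; E_r(θ) = E_p(θ) if θ = −δ; and E_r(θ) > E_p(θ) if θ > −δ. -/
theorem reward_vs_punishment_cost (N : ℕ) (hN : 3 ≤ N) (β δ θ : ℝ) (hβ : 0 < β)
    (hθ : 0 < θ) :
    (θ < -δ → Ereward N β δ θ < Epunish N β δ θ) ∧
    (θ = -δ → Ereward N β δ θ = Epunish N β δ θ) ∧
    (θ > -δ → Ereward N β δ θ > Epunish N β δ θ) := by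
  have gap := Ereward_sub_Epunish_eq_pairedSum hN β δ θ
  have hθ4 : 0 < θ / 4 := by positivity
  refine ⟨fun h => ?_, fun h => ?_, fun h => ?_⟩
  · have hx : β * (θ + δ) < 0 := mul_neg_of_pos_of_neg hβ (by linarith)
    have hP := neg_of_mul_pos_right (mul_pairedSum_pos hN hx.ne) hx.le
    have := mul_neg_of_pos_of_neg hθ4 hP
    linarith
  · rw [show β * (θ + δ) = 0 by rw [h, neg_add_cancel, mul_zero], pairedSum_zero, mul_zero] at gap
    linarith
  · have hx : 0 < β * (θ + δ) := mul_pos hβ (by linarith)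
    have hP := pos_of_mul_pos_right (mul_pairedSum_pos hN hx.ne') hx.le
    have := mul_pos hθ4 hP
    linarith
end

section
/- For every integer N ≥ 2 and all reals β > 0, δ and θ, the ratio of the fixation probabilities satisfies ρ_{D,C} / ρ_{C,D} = e^{β(N−1)(δ + θ)}. -/
open Real Finset Filter Topology

/-- Fixation probability of a single cooperator in a population of defectors under the
pairwise comparison (Fermi) rule with constant payoff advantage `δ + θ` of cooperators:
`ρ_{D,C} = (1 + Σ_{i=1}^{N−1} Π_{k=1}^{i} (1 + e^{−x})/(1 + e^{x}))⁻¹` with `x = β(θ+δ)`. -/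
noncomputable def rhoDC (N : ℕ) (β δ θ : ℝ) : ℝ :=
  (1 + ∑ i ∈ Finset.range (N - 1), ∏ _k ∈ Finset.range (i + 1),
    (1 + Real.exp (-(β * (θ + δ)))) / (1 + Real.exp (β * (θ + δ))))⁻¹

/-- Fixation probability of a single defector in a population of cooperators:
`ρ_{C,D} = (1 + Σ_{i=1}^{N−1} Π_{k=1}^{i} (1 + e^{x})/(1 + e^{−x}))⁻¹` with `x = β(θ+δ)`. -/
noncomputable def rhoCD (N : ℕ) (β δ θ : ℝ) : ℝ :=
  (1 + ∑ i ∈ Finset.range (N - 1), ∏ _k ∈ Finset.range (i + 1),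
    (1 + Real.exp (β * (θ + δ))) / (1 + Real.exp (-(β * (θ + δ)))))⁻¹

/-!
With constant payoff advantage the Fermi transition ratio `(1 + e^{-x}) / (1 + e^{x})` is just
`r = e^{-x}`, so `1/ρ_{D,C} = Σ_{i<N} r^i` and `1/ρ_{C,D} = Σ_{i<N} r^{-i}`. Reversing the order
of summation in the second sum gives `Σ_{i<N} r^{-i} = r^{-(N-1)} Σ_{i<N} r^i`, and the ratio of
the two fixation probabilities is `r^{-(N-1)} = e^{(N-1)x}`.
-/

theorem one_add_exp_neg_div_one_add_exp (x : ℝ) :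
    (1 + exp (-x)) / (1 + exp x) = exp (-x) := by
  rw [div_eq_iff (by positivity), mul_add, mul_one, ← exp_add, neg_add_cancel, exp_zero,
    add_comm]

theorem one_add_sum_range_prod_const {R : Type*} [CommSemiring R] (c : R) (n : ℕ) :
    1 + ∑ i ∈ range n, ∏ _k ∈ range (i + 1), c = ∑ i ∈ range (n + 1), c ^ i := by
  simp only [prod_const, card_range, sum_range_succ' (fun i => c ^ i), pow_zero, add_comm]

theorem sum_range_succ_inv_pow {K : Type*} [Field K] {r : K} (hr : r ≠ 0) (n : ℕ) :
    ∑ i ∈ range (n + 1), r⁻¹ ^ i = r⁻¹ ^ n * ∑ i ∈ range (n + 1), r ^ i := by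
  rw [mul_sum, ← sum_range_reflect]
  refine sum_congr rfl fun i hi => ?_
  have hin : i ≤ n := Nat.lt_succ_iff.mp (mem_range.mp hi)
  rw [add_tsub_cancel_right, pow_sub₀ _ (inv_ne_zero hr) hin, ← inv_pow, inv_inv]

theorem fixation_probability_ratio_general (N : ℕ) (hN : 2 ≤ N) (β δ θ : ℝ) :
    rhoDC N β δ θ / rhoCD N β δ θ = Real.exp (β * ((N : ℝ) - 1) * (δ + θ)) := by
  obtain ⟨n, rfl⟩ : ∃ n, N = n + 1 := ⟨N - 1, by omega⟩
  set x := β * (θ + δ) with hx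
  have hDC : rhoDC (n + 1) β δ θ = (∑ i ∈ range (n + 1), exp (-x) ^ i)⁻¹ := by
    rw [rhoDC, one_add_exp_neg_div_one_add_exp, add_tsub_cancel_right,
      one_add_sum_range_prod_const]
  have hCD : rhoCD (n + 1) β δ θ = (∑ i ∈ range (n + 1), (exp (-x))⁻¹ ^ i)⁻¹ := by
    have hratio : (1 + exp x) / (1 + exp (-x)) = (exp (-x))⁻¹ := by
      simpa [exp_neg] using one_add_exp_neg_div_one_add_exp (-x)
    rw [rhoCD, hratio, add_tsub_cancel_right, one_add_sum_range_prod_const]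
  have hsum : ∑ i ∈ range (n + 1), exp (-x) ^ i ≠ 0 :=
    (sum_pos (fun i _ => by positivity) nonempty_range_add_one).ne'
  rw [hDC, hCD, sum_range_succ_inv_pow (exp_pos _).ne', inv_div_inv, mul_div_assoc,
    div_self hsum, mul_one, exp_neg, inv_inv, ← exp_nat_mul, hx]
  congr 1
  push_cast
  ring

/-- For every integer N ≥ 2 and all reals β > 0, δ and θ,
ρ_{D,C} / ρ_{C,D} = e^{β(N−1)(δ + θ)}. -/
theorem fixation_probability_ratio (N : ℕ) (hN : 2 ≤ N) (β δ θ : ℝ) (hβ : 0 < β) :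
    rhoDC N β δ θ / rhoCD N β δ θ = Real.exp (β * ((N : ℝ) - 1) * (δ + θ)) :=
  fixation_probability_ratio_general N hN β δ θ
end

section
/- For all integers N, n, i with 2 ≤ n ≤ N and 0 ≤ i ≤ N−1, and all reals r, c, the average payoff of a defector in the Public Goods Game satisfies Π_D(i) = Σ_{j=0}^{n−1} [C(i,j)·C(N−1−i,n−1−j)/C(N−1,n−1)]·(j·rc/n) = rc(n−1)·i/(n(N−1)). -/
open Real Finset

/-- Average payoff of a cooperator in the Public Goods Game in a population of `N` players
with `i` cooperators, where groups of size `n` are sampled without replacement: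
`Π_C(i) = Σ_{j=0}^{n−1} [C(i−1,j)·C(N−i,n−1−j)/C(N−1,n−1)]·((j+1)·rc/n − c)`. -/
noncomputable def PiC (N n : ℕ) (r c : ℝ) (i : ℕ) : ℝ :=
  ∑ j ∈ Finset.range n,
    (((i - 1).choose j : ℝ) * ((N - i).choose (n - 1 - j) : ℝ) / ((N - 1).choose (n - 1) : ℝ))
      * (((j : ℝ) + 1) * r * c / (n : ℝ) - c)

/-- Average payoff of a defector in the Public Goods Game:
`Π_D(i) = Σ_{j=0}^{n−1} [C(i,j)·C(N−1−i,n−1−j)/C(N−1,n−1)]·(j·rc/n)`. -/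
noncomputable def PiD (N n : ℕ) (r c : ℝ) (i : ℕ) : ℝ :=
  ∑ j ∈ Finset.range n,
    ((i.choose j : ℝ) * ((N - 1 - i).choose (n - 1 - j) : ℝ) / ((N - 1).choose (n - 1) : ℝ))
      * ((j : ℝ) * r * c / (n : ℝ))

/-!
A defector's payoff is `rc/n` times the expected number of cooperators among its `n - 1`
co-players, who are drawn without replacement from `i` cooperators and `N - 1 - i` defectors.
That count is hypergeometric with mean `(n - 1) i / (N - 1)`.
-/

/-- Absorption `j C(m, j) = m C(m - 1, j - 1)` reduces the sum to Vandermonde's identity. -/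
theorem Nat.sum_mul_choose_mul_choose (m p k : ℕ) :
    ∑ j ∈ range (k + 2), j * (m.choose j * p.choose (k + 1 - j)) =
      m * (m + p - 1).choose k := by
  rw [sum_range_succ', zero_mul, add_zero]
  cases m with
  | zero => simp
  | succ m =>
    calc ∑ j ∈ range (k + 1), (j + 1) * ((m + 1).choose (j + 1) * p.choose (k + 1 - (j + 1)))
        = ∑ j ∈ range (k + 1), (m + 1) * (m.choose j * p.choose (k - j)) := by
          refine sum_congr rfl fun j _ => ?_
          rw [Nat.add_sub_add_right, ← mul_assoc, mul_comm (j + 1), ← Nat.add_one_mul_choose_eq,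
            mul_assoc]
      _ = (m + 1) * (m + 1 + p - 1).choose k := by
          rw [← mul_sum, Nat.add_right_comm, Nat.add_sub_cancel, Nat.add_choose_eq,
            Nat.sum_antidiagonal_eq_sum_range_succ (fun a b => m.choose a * p.choose b)]

theorem PiD_eq_mul_sum (N n : ℕ) (r c : ℝ) (i : ℕ) :
    PiD N n r c i = r * c / (n * (N - 1).choose (n - 1)) *
      ↑(∑ j ∈ range n, j * (i.choose j * (N - 1 - i).choose (n - 1 - j))) := by
  rw [PiD, Nat.cast_sum, mul_sum]
  refine sum_congr rfl fun j _ => ?_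
  push_cast
  ring

/-- For 2 ≤ n ≤ N, 0 ≤ i ≤ N−1 and all reals r, c, the average payoff of a
defector in the PGG equals rc(n−1)·i/(n(N−1)). -/
theorem PGG_defector_payoff (N n i : ℕ) (hn : 2 ≤ n) (hnN : n ≤ N)
    (hiN : i ≤ N - 1) (r c : ℝ) :
    PiD N n r c i = r * c * ((n : ℝ) - 1) * (i : ℝ) / ((n : ℝ) * ((N : ℝ) - 1)) := by
  obtain ⟨k, rfl⟩ : ∃ k, n = k + 2 := ⟨n - 2, by omega⟩
  obtain ⟨M, rfl⟩ : ∃ M, N = M + 2 := ⟨N - 2, by omega⟩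
  have hsum : ∑ j ∈ range (k + 2), j * (i.choose j * (M + 1 - i).choose (k + 1 - j)) =
      i * M.choose k := by
    rw [Nat.sum_mul_choose_mul_choose]
    congr 2
    omega
  have habsorb : ((M + 1 : ℕ) : ℝ) * M.choose k = (M + 1).choose (k + 1) * (k + 1) := by
    exact_mod_cast Nat.add_one_mul_choose_eq M k
  have hchoose : ((M + 1).choose (k + 1) : ℝ) ≠ 0 := by
    exact_mod_cast (Nat.choose_pos (by omega)).ne'
  rw [PiD_eq_mul_sum, show M + 2 - 1 = M + 1 by omega, show k + 2 - 1 = k + 1 by omega, hsum]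
  push_cast at habsorb ⊢
  rw [show (M : ℝ) + 2 - 1 = M + 1 by ring]
  field_simp
  linear_combination r * c * i * habsorb
end

section
/- For all integers N, n with 2 ≤ n ≤ N, all reals r, c, and every integer i with 1 ≤ i ≤ N−1, the payoff difference in the Public Goods Game is independent of i and equals Π_C(i) − Π_D(i) = −c·(1 − r(N−n)/(n(N−1))). -/
/-!
A focal player's `n - 1` co-players are drawn without replacement from the other `N - 1`
players, so the number `j` of cooperating co-players is hypergeometric: with `i - 1` marked
players for a cooperator and `i` for a defector. Both payoffs are affine in `j`, and the
hypergeometric mean `m K / M` is linear in the number `K` of marked items, so the means for the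
two focal players differ by `(n - 1)/(N - 1)` whatever `i` is.
-/
open Real Finset

/-- Probability of `j` marked items in a draw of `m` out of `M` items, `K` of them marked. -/
noncomputable def hypergeomWeight (M K m j : ℕ) : ℝ :=
  (K.choose j : ℝ) * ((M - K).choose (m - j) : ℝ) / (M.choose m : ℝ)

namespace Nat

theorem sum_range_choose_mul_choose (a b k : ℕ) :
    ∑ j ∈ range (k + 1), a.choose j * b.choose (k - j) = (a + b).choose k := by
  rw [add_choose_eq, Finset.Nat.sum_antidiagonal_eq_sum_range_succ_mk]

theorem add_one_mul_choose_add_one (a j : ℕ) :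
    (j + 1) * a.choose (j + 1) = a * (a - 1).choose j := by
  cases a with
  | zero => simp
  | succ a => rw [Nat.add_sub_cancel, add_one_mul_choose_eq, Nat.mul_comm]

theorem sum_range_mul_choose_mul_choose (a b k : ℕ) :
    ∑ j ∈ range (k + 2), j * (a.choose j * b.choose (k + 1 - j)) =
      a * (a + b - 1).choose k := by
  have hshift : ∀ j ∈ range (k + 1),
      (j + 1) * (a.choose (j + 1) * b.choose (k + 1 - (j + 1))) =
        a * ((a - 1).choose j * b.choose (k - j)) := by
    intro j _
    rw [Nat.add_sub_add_right, ← Nat.mul_assoc, add_one_mul_choose_add_one, Nat.mul_assoc]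
  rw [sum_range_succ', sum_congr rfl hshift, ← mul_sum, sum_range_choose_mul_choose]
  cases a with
  | zero => simp
  | succ a => simp [Nat.add_right_comm a 1 b]

end Nat

section hypergeomWeight

variable {M K m : ℕ}

theorem sum_hypergeomWeight (hK : K ≤ M) (hm : m ≤ M) :
    ∑ j ∈ range (m + 1), hypergeomWeight M K m j = 1 := by
  have hpos : (M.choose m : ℝ) ≠ 0 := by exact_mod_cast (Nat.choose_pos hm).ne'
  simp only [hypergeomWeight, ← sum_div]
  rw [div_eq_one_iff_eq hpos]
  exact_mod_cast Nat.add_sub_cancel' hK ▸ Nat.sum_range_choose_mul_choose K (M - K) m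

theorem sum_mul_hypergeomWeight (hK : K ≤ M) (hm : m ≤ M) :
    ∑ j ∈ range (m + 1), (j : ℝ) * hypergeomWeight M K m j = m * K / M := by
  obtain _ | m := m
  · simp
  obtain _ | M := M
  · omega
  have hmoment : ∑ j ∈ range (m + 2), (j : ℝ) * K.choose j * (M + 1 - K).choose (m + 1 - j) =
      K * M.choose m := by
    have h := Nat.sum_range_mul_choose_mul_choose K (M + 1 - K) m
    rw [Nat.add_sub_cancel' hK, Nat.add_sub_cancel] at h
    simp only [mul_assoc]
    exact_mod_cast h
  have hpascal : ((M + 1 : ℕ) : ℝ) * M.choose m = (M + 1).choose (m + 1) * (m + 1 : ℕ) := by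
    exact_mod_cast Nat.add_one_mul_choose_eq M m
  have hpos : ((M + 1).choose (m + 1) : ℝ) ≠ 0 := by exact_mod_cast (Nat.choose_pos hm).ne'
  simp only [hypergeomWeight, mul_div_assoc', ← sum_div, ← mul_assoc, hmoment]
  rw [div_eq_div_iff hpos (by positivity)]
  linear_combination (K : ℝ) * hpascal

end hypergeomWeight

theorem PiC_succ (M m K : ℕ) (r c : ℝ) (hK : K ≤ M) (hm : m ≤ M) :
    PiC (M + 1) (m + 1) r c (K + 1) = r * c / (m + 1) * (m * K / M + 1) - c := by
  have hsummand : ∀ j ∈ range (m + 1),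
      hypergeomWeight M K m j * (((j : ℝ) + 1) * r * c / ((m + 1 : ℕ) : ℝ) - c) =
        r * c / (m + 1) * ((j : ℝ) * hypergeomWeight M K m j) +
          (r * c / (m + 1) - c) * hypergeomWeight M K m j := by
    intro j _
    push_cast
    ring
  calc PiC (M + 1) (m + 1) r c (K + 1)
      = ∑ j ∈ range (m + 1),
          hypergeomWeight M K m j * (((j : ℝ) + 1) * r * c / ((m + 1 : ℕ) : ℝ) - c) := by
        simp only [PiC, hypergeomWeight, Nat.add_sub_cancel, Nat.add_sub_add_right]
    _ = r * c / (m + 1) * (m * K / M + 1) - c := by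
        rw [sum_congr rfl hsummand, sum_add_distrib, ← mul_sum, ← mul_sum,
          sum_mul_hypergeomWeight hK hm, sum_hypergeomWeight hK hm]
        ring

theorem PiD_succ (M m K : ℕ) (r c : ℝ) (hK : K ≤ M) (hm : m ≤ M) :
    PiD (M + 1) (m + 1) r c K = r * c / (m + 1) * (m * K / M) := by
  calc PiD (M + 1) (m + 1) r c K
      = r * c / (m + 1) * ∑ j ∈ range (m + 1), (j : ℝ) * hypergeomWeight M K m j := by
        simp only [PiD, hypergeomWeight, Nat.add_sub_cancel, mul_sum]
        refine sum_congr rfl fun j _ => ?_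
        push_cast
        ring
    _ = r * c / (m + 1) * (m * K / M) := by rw [sum_mul_hypergeomWeight hK hm]

/-- For 2 ≤ n ≤ N, all reals r, c, and every 1 ≤ i ≤ N−1, the payoff
difference in the PGG is independent of i and equals −c·(1 − r(N−n)/(n(N−1))). -/
theorem PGG_payoff_difference (N n i : ℕ) (hn : 2 ≤ n) (hnN : n ≤ N)
    (hi1 : 1 ≤ i) (hiN : i ≤ N - 1) (r c : ℝ) :
    PiC N n r c i - PiD N n r c i =
      -c * (1 - r * ((N : ℝ) - (n : ℝ)) / ((n : ℝ) * ((N : ℝ) - 1))) := by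
  obtain ⟨m, rfl⟩ : ∃ m, n = m + 1 := ⟨n - 1, by omega⟩
  obtain ⟨K, rfl⟩ : ∃ K, i = K + 1 := ⟨i - 1, by omega⟩
  obtain ⟨M, rfl⟩ : ∃ M, N = M + 1 := ⟨N - 1, by omega⟩
  have hM : (M : ℝ) ≠ 0 := by exact_mod_cast (show M ≠ 0 by omega)
  rw [PiC_succ M m K r c (by omega) (by omega), PiD_succ M m (K + 1) r c (by omega) (by omega)]
  push_cast
  rw [add_sub_cancel_right]
  field_simp
  ring
end

section
/- For N = 3, the expected total cost of institutional reward has the closed form E_r(θ) = (9θ/4)·(5 + (4e^x − 1)/(1 + e^x + e^{2x})), where x = β(θ + δ). -/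
open Real Finset Filter Topology Matrix

/-! For `N = 3` both transient states have `p = 2/9`, and since
`1/(1 + e^{-x}) + 1/(1 + e^x) = 1` the two transition probabilities are `p σ` and `p (1 - σ)`
with `σ = sigmoid x`. Hence `I - U = (2/9) [[1, -σ], [-(1 - σ), 1]]`, whose inverse is read off
the adjugate, and `E_r = (9θ/4) (4 + σ)/(1 - σ + σ²)`; substituting `σ = e^x/(1 + e^x)` gives
the closed form. -/

lemma one_sub_add_sq_pos {R : Type*} [CommRing R] [LinearOrder R] [IsStrictOrderedRing R]
    (q : R) : 0 < 1 - q + q ^ 2 := by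
  nlinarith [sq_nonneg (2 * q - 1)]

theorem Matrix.inv_fin_two_of {K : Type*} [Field K] (a b c d : K) :
    (!![a, b; c, d])⁻¹ = (a * d - b * c)⁻¹ • !![d, -b; -c, a] := by
  rw [Matrix.inv_def, Matrix.det_fin_two_of, Matrix.adjugate_fin_two_of, Ring.inverse_eq_inv']

lemma one_sub_umat_three (β δ θ : ℝ) :
    1 - Umat 3 β δ θ =
      !![2 / 9, -(2 / 9 * sigmoid (β * (θ + δ))); -(2 / 9 * (1 - sigmoid (β * (θ + δ)))), 2 / 9] := by
  have hup : ∀ p : ℝ, p / (1 + exp (-(β * (θ + δ)))) = p * sigmoid (β * (θ + δ)) := fun p => rfl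
  have hdown : ∀ p : ℝ, p / (1 + exp (β * (θ + δ))) = p * (1 - sigmoid (β * (θ + δ))) := by
    intro p
    rw [← sigmoid_neg, sigmoid_def, neg_neg]
    rfl
  ext i j
  fin_cases i <;> fin_cases j <;> norm_num [Umat, hup, hdown] <;> ring

lemma fund_three_eq (β δ θ : ℝ) :
    fund 3 β δ θ = (2 / 9 * (1 - sigmoid (β * (θ + δ)) + sigmoid (β * (θ + δ)) ^ 2))⁻¹ •
      !![1, sigmoid (β * (θ + δ)); 1 - sigmoid (β * (θ + δ)), 1] := by
  rw [fund, one_sub_umat_three, Matrix.inv_fin_two_of]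
  generalize sigmoid (β * (θ + δ)) = σ
  have hpos := one_sub_add_sq_pos σ
  have hdet : 2 / 9 * (2 / 9) - -(2 / 9 * σ) * -(2 / 9 * (1 - σ)) = 4 / 81 * (1 - σ + σ ^ 2) := by
    ring
  rw [hdet]
  ext i j
  fin_cases i <;> fin_cases j <;>
    simp only [neg_neg, Fin.zero_eta, Fin.mk_one, Matrix.smul_apply, of_apply, cons_val',
      cons_val_zero, cons_val_one, cons_val_fin_one, smul_eq_mul] <;>
    field_simp <;> ring

lemma ereward_three_eq (β δ θ : ℝ) :
    Ereward 3 β δ θ = θ / 2 * ((fund 3 β δ θ 0 0 + fund 3 β δ θ 1 0) +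
      2 * (fund 3 β δ θ 0 1 + fund 3 β δ θ 1 1)) := by
  rw [Ereward, dif_pos le_rfl, Fin.sum_univ_two]
  norm_num [mul_comm]

lemma four_add_sigmoid_div_eq (x : ℝ) :
    (4 + sigmoid x) / (1 - sigmoid x + sigmoid x ^ 2) =
      5 + (4 * exp x - 1) / (1 + exp x + exp (2 * x)) := by
  have hσ : sigmoid x = exp x / (1 + exp x) := by
    rw [sigmoid_def, exp_neg]
    field_simp
    ring
  have h2 : exp (2 * x) = exp x ^ 2 := by rw [sq, ← exp_add, two_mul]
  have hq : 0 < 1 + exp x + exp x ^ 2 := by positivity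
  rw [div_eq_iff (one_sub_add_sq_pos _).ne', hσ, h2]
  field_simp
  ring

theorem reward_cost_N3_closed_form_general (β δ θ : ℝ) :
    Ereward 3 β δ θ =
      (9 * θ / 4) * (5 + (4 * Real.exp (β * (θ + δ)) - 1) /
        (1 + Real.exp (β * (θ + δ)) + Real.exp (2 * (β * (θ + δ))))) := by
  rw [← four_add_sigmoid_div_eq, ereward_three_eq, fund_three_eq]
  generalize sigmoid (β * (θ + δ)) = σ
  have hpos := one_sub_add_sq_pos σ
  simp only [Matrix.smul_apply, of_apply, cons_val', cons_val_zero, cons_val_one, cons_val_fin_one,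
    smul_eq_mul]
  field_simp
  ring

/-- For N = 3, the expected total cost of institutional reward has the closed
form E_r(θ) = (9θ/4)·(5 + (4e^x − 1)/(1 + e^x + e^{2x})), where x = β(θ + δ). -/
theorem reward_cost_N3_closed_form (β δ θ : ℝ) (hβ : 0 < β) :
    Ereward 3 β δ θ =
      (9 * θ / 4) * (5 + (4 * Real.exp (β * (θ + δ)) - 1) /
        (1 + Real.exp (β * (θ + δ)) + Real.exp (2 * (β * (θ + δ))))) :=
  reward_cost_N3_closed_form_general β δ θ
end
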